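/- Let s > 1, R > 0, and let f ∈ C^∞(R^n) satisfy |∂_x^α f(x)| ≤ C R^{|α|} α!^s ⟨x⟩^{a−|α|} for all α, x. For w > 0 define N = ⌊(Rw)^{−1/(s-1)}⌋ and the almost analytic extension f̃(x+iy) = ∑_{|α| ≤ N} (iy)^α/α! · ∂_x^α f(x) for |y_j| < w. Then for every pair of multi-indices α, β there exists C > 0 such that sup over w ∈ (0,1] and x+iy with |y_j| < w of |∂_x^α ∂_y^β f̃(x+iy)| / ⟨x⟩^{a−|α+β|} is at most C. -/

import Mathlib

/-- Japanese bracket ⟨x⟩ = (1 + |x|²)^{1/2} on ℝⁿ. -/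
noncomputable def jb {n : ℕ} (x : Fin n → ℝ) : ℝ := Real.sqrt (1 + ∑ i, (x i) ^ 2)

/-- Partial derivative in the j-th coordinate direction. -/
noncomputable def pd {n : ℕ} (j : Fin n) (f : (Fin n → ℝ) → ℝ) : (Fin n → ℝ) → ℝ :=
  fun x => fderiv ℝ f x (Pi.single j 1)

/-- Multi-index partial derivative ∂^α. -/
noncomputable def mderiv {n : ℕ} (α : Fin n → ℕ) (f : (Fin n → ℝ) → ℝ) : (Fin n → ℝ) → ℝ :=
  (List.finRange n).foldr (fun j g => (pd j)^[α j] g) f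

/-- Almost analytic extension of order N:
    f̃(x+iy) = ∑_{|α| ≤ N} (iy)^α/α! ∂^α f(x), viewed as a function of (x, y). -/
noncomputable def aae {n : ℕ} (N : ℕ) (f : (Fin n → ℝ) → ℝ) :
    (Fin n → ℝ) → (Fin n → ℝ) → ℂ := fun x y =>
  ∑ α ∈ Finset.univ.filter (fun α : Fin n → Fin (N + 1) => ∑ i, (α i : ℕ) ≤ N),
    (∏ i, (Complex.I * (y i : ℂ)) ^ (α i : ℕ)) /
      ((∏ i, Nat.factorial (α i : ℕ) : ℕ) : ℂ) * ((mderiv (fun i => (α i : ℕ)) f x : ℝ) : ℂ)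

/-- x-partial derivative of a two-variable complex-valued function. -/
noncomputable def pdx {n : ℕ} (j : Fin n) (g : (Fin n → ℝ) → (Fin n → ℝ) → ℂ) :
    (Fin n → ℝ) → (Fin n → ℝ) → ℂ :=
  fun x y => fderiv ℝ (fun x' => g x' y) x (Pi.single j 1)

/-- y-partial derivative of a two-variable complex-valued function. -/
noncomputable def pdy {n : ℕ} (j : Fin n) (g : (Fin n → ℝ) → (Fin n → ℝ) → ℂ) :
    (Fin n → ℝ) → (Fin n → ℝ) → ℂ :=
  fun x y => fderiv ℝ (fun y' => g x y') y (Pi.single j 1)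

/-- Multi-index x-derivative ∂_x^α. -/
noncomputable def mdx {n : ℕ} (α : Fin n → ℕ) (g : (Fin n → ℝ) → (Fin n → ℝ) → ℂ) :
    (Fin n → ℝ) → (Fin n → ℝ) → ℂ :=
  (List.finRange n).foldr (fun j G => (pdx j)^[α j] G) g

/-- Multi-index y-derivative ∂_y^β. -/
noncomputable def mdy {n : ℕ} (β : Fin n → ℕ) (g : (Fin n → ℝ) → (Fin n → ℝ) → ℂ) :
    (Fin n → ℝ) → (Fin n → ℝ) → ℂ :=
  (List.finRange n).foldr (fun j G => (pdy j)^[β j] G) g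

/-! ### Auxiliary lemmas: calculus of `pd`/`mderiv` -/

section PDCalc

variable {n : ℕ}

lemma contDiff_pd {g : (Fin n → ℝ) → ℝ} (hg : ContDiff ℝ (⊤ : ℕ∞) g) (j : Fin n) :
    ContDiff ℝ (⊤ : ℕ∞) (pd j g) :=
  (hg.fderiv_right (by simp)).clm_apply contDiff_const

lemma pd_comm {g : (Fin n → ℝ) → ℝ} (hg : ContDiff ℝ (⊤ : ℕ∞) g) (j k : Fin n) :
    pd j (pd k g) = pd k (pd j g) := by
  funext x
  have hdiff : ∀ z, DifferentiableAt ℝ g z := fun z =>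
    (hg.differentiable (by simp)).differentiableAt
  have hd2 : DifferentiableAt ℝ (fderiv ℝ g) x :=
    ((hg.fderiv_right (m := (⊤ : ℕ∞)) (by simp)).differentiable (by simp)).differentiableAt
  have key : ∀ v w : Fin n → ℝ,
      fderiv ℝ (fun z => fderiv ℝ g z v) x w = fderiv ℝ (fderiv ℝ g) x w v := by
    intro v w
    rw [fderiv_clm_apply hd2 (differentiableAt_const v)]
    simp
  have symm := second_derivative_symmetric (f := g) (f' := fderiv ℝ g)
    (f'' := fderiv ℝ (fderiv ℝ g) x) (fun z => (hdiff z).hasFDerivAt)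
    hd2.hasFDerivAt (Pi.single k 1) (Pi.single j 1)
  show fderiv ℝ (fun z => fderiv ℝ g z (Pi.single k 1)) x (Pi.single j 1)
      = fderiv ℝ (fun z => fderiv ℝ g z (Pi.single j 1)) x (Pi.single k 1)
  rw [key, key, symm]

lemma contDiff_pd_iter {g : (Fin n → ℝ) → ℝ} (hg : ContDiff ℝ (⊤ : ℕ∞) g) (j : Fin n) (m : ℕ) :
    ContDiff ℝ (⊤ : ℕ∞) ((pd j)^[m] g) := by
  induction m generalizing g with
  | zero => exact hg
  | succ m ih => rw [Function.iterate_succ_apply]; exact ih (contDiff_pd hg j)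

/-- generic foldr used by mderiv -/
noncomputable def foldrL {n : ℕ} (l : List (Fin n)) (μ : Fin n → ℕ)
    (g : (Fin n → ℝ) → ℝ) : (Fin n → ℝ) → ℝ :=
  l.foldr (fun j h => (pd j)^[μ j] h) g

lemma contDiff_foldrL {g : (Fin n → ℝ) → ℝ} (hg : ContDiff ℝ (⊤ : ℕ∞) g) (l : List (Fin n))
    (μ : Fin n → ℕ) : ContDiff ℝ (⊤ : ℕ∞) (foldrL l μ g) := by
  induction l generalizing g with
  | nil => exact hg
  | cons a l ih => exact contDiff_pd_iter (ih hg) a (μ a)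

lemma pd_iter_comm {g : (Fin n → ℝ) → ℝ} (hg : ContDiff ℝ (⊤ : ℕ∞) g) (j k : Fin n) (m : ℕ) :
    pd j ((pd k)^[m] g) = (pd k)^[m] (pd j g) := by
  induction m generalizing g with
  | zero => rfl
  | succ m ih =>
      rw [Function.iterate_succ_apply, Function.iterate_succ_apply]
      rw [ih (contDiff_pd hg k), pd_comm hg j k]

lemma pd_foldrL_comm {g : (Fin n → ℝ) → ℝ} (hg : ContDiff ℝ (⊤ : ℕ∞) g) (j : Fin n)
    (l : List (Fin n)) (μ : Fin n → ℕ) :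
    pd j (foldrL l μ g) = foldrL l μ (pd j g) := by
  induction l generalizing g with
  | nil => rfl
  | cons a l ih =>
      show pd j ((pd a)^[μ a] (foldrL l μ g)) = (pd a)^[μ a] (foldrL l μ (pd j g))
      rw [pd_iter_comm (contDiff_foldrL hg l μ) j a, ih hg]

lemma iter_foldrL_comm {g : (Fin n → ℝ) → ℝ} (hg : ContDiff ℝ (⊤ : ℕ∞) g) (j : Fin n) (m : ℕ)
    (l : List (Fin n)) (μ : Fin n → ℕ) :
    (pd j)^[m] (foldrL l μ g) = foldrL l μ ((pd j)^[m] g) := by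
  induction m generalizing g with
  | zero => rfl
  | succ m ih =>
      rw [Function.iterate_succ_apply, Function.iterate_succ_apply,
        pd_foldrL_comm hg j l μ, ih (contDiff_pd hg j)]

lemma foldrL_foldrL {g : (Fin n → ℝ) → ℝ} (hg : ContDiff ℝ (⊤ : ℕ∞) g) (l : List (Fin n))
    (μ ν : Fin n → ℕ) :
    foldrL l μ (foldrL l ν g) = foldrL l (fun i => μ i + ν i) g := by
  induction l generalizing g with
  | nil => rfl
  | cons a l ih =>
      show (pd a)^[μ a] (foldrL l μ ((pd a)^[ν a] (foldrL l ν g)))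
        = (pd a)^[μ a + ν a] (foldrL l (fun i => μ i + ν i) g)
      rw [← iter_foldrL_comm (contDiff_foldrL hg l ν) a (ν a) l μ,
        ← Function.iterate_add_apply, ih hg]

lemma mderiv_mderiv {f : (Fin n → ℝ) → ℝ} (hf : ContDiff ℝ (⊤ : ℕ∞) f) (μ ν : Fin n → ℕ) :
    mderiv μ (mderiv ν f) = mderiv (fun i => μ i + ν i) f :=
  foldrL_foldrL hf (List.finRange n) μ ν

lemma contDiff_mderiv {f : (Fin n → ℝ) → ℝ} (hf : ContDiff ℝ (⊤ : ℕ∞) f) (μ : Fin n → ℕ) :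
    ContDiff ℝ (⊤ : ℕ∞) (mderiv μ f) := contDiff_foldrL hf (List.finRange n) μ

lemma foldrL_zero {g : (Fin n → ℝ) → ℝ} (l : List (Fin n)) (μ : Fin n → ℕ)
    (h : ∀ i ∈ l, μ i = 0) : foldrL l μ g = g := by
  induction l with
  | nil => rfl
  | cons a l ih =>
      show (pd a)^[μ a] (foldrL l μ g) = g
      rw [h a (List.mem_cons_self), ih fun i hi => h i (List.mem_cons_of_mem a hi)]
      rfl

lemma mderiv_single {g : (Fin n → ℝ) → ℝ} (j : Fin n) :
    mderiv (Pi.single j 1) g = pd j g := by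
  have : ∀ l : List (Fin n), l.Nodup → j ∈ l → foldrL l (Pi.single j 1) g = pd j g := by
    intro l
    induction l with
    | nil => intro _ h; simp at h
    | cons a l ih =>
        intro hnd hmem
        rcases List.mem_cons.1 hmem with h | h
        · subst h
          show (pd j)^[(Pi.single j 1 : Fin n → ℕ) j] (foldrL l (Pi.single j 1) g) = pd j g
          rw [foldrL_zero l _ (fun i hi => Pi.single_eq_of_ne
            (fun (he : i = j) => ((List.nodup_cons.1 hnd).1 (he ▸ hi))) 1)]
          simp
        · show (pd a)^[(Pi.single j 1 : Fin n → ℕ) a] (foldrL l (Pi.single j 1) g) = pd j g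
          rw [Pi.single_eq_of_ne (fun (he : a = j) => (List.nodup_cons.1 hnd).1 (he ▸ h)) 1]
          exact ih (List.nodup_cons.1 hnd).2 h
  exact this (List.finRange n) (List.nodup_finRange n) (List.mem_finRange j)

lemma pd_mderiv {f : (Fin n → ℝ) → ℝ} (hf : ContDiff ℝ (⊤ : ℕ∞) f) (j : Fin n) (m : Fin n → ℕ) :
    pd j (mderiv m f) = mderiv (Function.update m j (m j + 1)) f := by
  rw [← mderiv_single j, mderiv_mderiv hf]
  have h : (fun i => (Pi.single j 1 : Fin n → ℕ) i + m i) = Function.update m j (m j + 1) := by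
    funext i
    rcases eq_or_ne i j with rfl | h
    · simp [Nat.add_comm]
    · simp [h, Pi.single_eq_of_ne h]
  rw [h]

end PDCalc

/-! ### The sum form of derivatives of the almost analytic extension -/

section SFdef

variable {n : ℕ}

/-- sum form of `∂_x^α ∂_y^β f̃` -/
noncomputable def SF {n : ℕ} (f : (Fin n → ℝ) → ℝ) (N : ℕ) (α β : Fin n → ℕ) :
    (Fin n → ℝ) → (Fin n → ℝ) → ℂ := fun x y =>
  ∑ γ ∈ Finset.univ.filter (fun γ : Fin n → Fin (N + 1) => ∑ i, (γ i : ℕ) ≤ N),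
    (∏ i, ((Nat.descFactorial (γ i : ℕ) (β i) : ℂ) *
        Complex.I ^ (β i + ((γ i : ℕ) - β i)) * (((y i) ^ ((γ i : ℕ) - β i) : ℝ) : ℂ))) /
      ((∏ i, Nat.factorial (γ i : ℕ) : ℕ) : ℂ) *
      ((mderiv (fun i => α i + (γ i : ℕ)) f x : ℝ) : ℂ)

lemma aae_eq_SF (f : (Fin n → ℝ) → ℝ) (N : ℕ) :
    aae N f = SF f N (fun _ => 0) (fun _ => 0) := by
  funext x y
  simp [aae, SF, mul_pow, Complex.ofReal_pow]

lemma pdx_SF {f : (Fin n → ℝ) → ℝ} (hf : ContDiff ℝ (⊤ : ℕ∞) f) (N : ℕ) (α β : Fin n → ℕ)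
    (j : Fin n) :
    pdx j (SF f N α β) = SF f N (Function.update α j (α j + 1)) β := by
  funext x y
  set A := Finset.univ.filter (fun γ : Fin n → Fin (N + 1) => ∑ i, (γ i : ℕ) ≤ N) with hA
  set c : (Fin n → Fin (N + 1)) → ℂ := fun γ =>
    (∏ i, ((Nat.descFactorial (γ i : ℕ) (β i) : ℂ) *
        Complex.I ^ (β i + ((γ i : ℕ) - β i)) * (((y i) ^ ((γ i : ℕ) - β i) : ℝ) : ℂ))) /
      ((∏ i, Nat.factorial (γ i : ℕ) : ℕ) : ℂ) with hc
  have hdiff : ∀ γ : Fin n → Fin (N + 1),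
      HasFDerivAt (mderiv (fun i => α i + (γ i : ℕ)) f)
        (fderiv ℝ (mderiv (fun i => α i + (γ i : ℕ)) f) x) x :=
    fun γ => ((contDiff_mderiv hf _).differentiable (by simp) x).hasFDerivAt
  have hF : HasFDerivAt (fun x' => SF f N α β x' y)
      (∑ γ ∈ A, c γ • (Complex.ofRealCLM.comp
        (fderiv ℝ (mderiv (fun i => α i + (γ i : ℕ)) f) x))) x := by
    apply HasFDerivAt.fun_sum
    intro γ _
    exact (Complex.ofRealCLM.hasFDerivAt.comp x (hdiff γ)).const_mul (c γ)
  show fderiv ℝ (fun x' => SF f N α β x' y) x (Pi.single j 1) = _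
  rw [hF.fderiv]
  simp only [SF, ContinuousLinearMap.coe_sum', Finset.sum_apply,
    ContinuousLinearMap.coe_smul', Pi.smul_apply, ContinuousLinearMap.coe_comp',
    Function.comp_apply, Complex.ofRealCLM_apply, smul_eq_mul]
  refine Finset.sum_congr rfl fun γ _ => ?_
  have h0 : fderiv ℝ (mderiv (fun i => α i + (γ i : ℕ)) f) x (Pi.single j 1)
      = pd j (mderiv (fun i => α i + (γ i : ℕ)) f) x := rfl
  rw [h0, pd_mderiv hf]
  have harg : Function.update (fun i => α i + (γ i : ℕ)) j ((fun i => α i + (γ i : ℕ)) j + 1)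
      = fun i => Function.update α j (α j + 1) i + (γ i : ℕ) := by
    funext i
    rcases eq_or_ne i j with rfl | h
    · simp [Nat.add_right_comm]
    · simp [Function.update_of_ne h]
  rw [harg]

lemma pdy_SF (f : (Fin n → ℝ) → ℝ) (N : ℕ) (α β : Fin n → ℕ) (j : Fin n) :
    pdy j (SF f N α β) = SF f N α (Function.update β j (β j + 1)) := by
  funext x y
  set A := Finset.univ.filter (fun γ : Fin n → Fin (N + 1) => ∑ i, (γ i : ℕ) ≤ N) with hA
  set g : (Fin n → Fin (N + 1)) → Fin n → (Fin n → ℝ) → ℂ := fun γ i y' =>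
    (Nat.descFactorial (γ i : ℕ) (β i) : ℂ) *
        Complex.I ^ (β i + ((γ i : ℕ) - β i)) * (((y' i) ^ ((γ i : ℕ) - β i) : ℝ) : ℂ) with hg
  set g' : (Fin n → Fin (N + 1)) → Fin n → (Fin n → ℝ) →L[ℝ] ℂ := fun γ i =>
    ((Nat.descFactorial (γ i : ℕ) (β i) : ℂ) * Complex.I ^ (β i + ((γ i : ℕ) - β i))) •
      (Complex.ofRealCLM.comp
        (((((γ i : ℕ) - β i : ℕ) : ℝ) * (y i) ^ ((γ i : ℕ) - β i - 1)) •
          (ContinuousLinearMap.proj i : (Fin n → ℝ) →L[ℝ] ℝ))) with hg'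
  have hfac : ∀ γ i, HasFDerivAt (fun y' => g γ i y') (g' γ i) y := by
    intro γ i
    have h1 : HasFDerivAt (fun y' : Fin n → ℝ => y' i)
        (ContinuousLinearMap.proj i : (Fin n → ℝ) →L[ℝ] ℝ) y :=
      hasFDerivAt_apply i y
    have h2 := (hasDerivAt_pow ((γ i : ℕ) - β i) (y i)).comp_hasFDerivAt y h1
    have h3 := (Complex.ofRealCLM.hasFDerivAt.comp y h2).const_mul
      ((Nat.descFactorial (γ i : ℕ) (β i) : ℂ) * Complex.I ^ (β i + ((γ i : ℕ) - β i)))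
    exact h3
  set F : (Fin n → Fin (N + 1)) → ℂ := fun γ => ((∏ i, Nat.factorial (γ i : ℕ) : ℕ) : ℂ) with hF
  set M : (Fin n → Fin (N + 1)) → ℂ := fun γ =>
    ((mderiv (fun i => α i + (γ i : ℕ)) f x : ℝ) : ℂ) with hM
  have hprod : ∀ γ, HasFDerivAt (fun y' => (∏ i, g γ i y') * (M γ / F γ))
      ((M γ / F γ) • (∑ i, (∏ k ∈ Finset.univ.erase i, g γ k y) • g' γ i)) y := by
    intro γ
    exact (HasFDerivAt.finset_prod (fun i _ => hfac γ i)).mul_const (M γ / F γ)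
  have hfun : (fun y' => SF f N α β x y')
      = fun y' => ∑ γ ∈ A, (∏ i, g γ i y') * (M γ / F γ) := by
    funext y'
    simp only [SF]
    exact Finset.sum_congr rfl (fun _ _ => by rw [div_mul_eq_mul_div, mul_div_assoc])
  have hsum : HasFDerivAt (fun y' => SF f N α β x y')
      (∑ γ ∈ A, (M γ / F γ) • (∑ i, (∏ k ∈ Finset.univ.erase i, g γ k y) • g' γ i)) y := by
    rw [hfun]
    exact HasFDerivAt.fun_sum (fun γ _ => hprod γ)
  show fderiv ℝ (fun y' => SF f N α β x y') y (Pi.single j 1) = _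
  rw [hsum.fderiv]
  simp only [SF, ContinuousLinearMap.coe_sum', Finset.sum_apply]
  refine Finset.sum_congr rfl fun γ _ => ?_
  have heval : ((M γ / F γ) • (∑ i, (∏ k ∈ Finset.univ.erase i, g γ k y) • g' γ i))
      (Pi.single j 1)
      = (M γ / F γ) * ((∏ k ∈ Finset.univ.erase j, g γ k y) *
          (((Nat.descFactorial (γ j : ℕ) (β j) : ℂ) * Complex.I ^ (β j + ((γ j : ℕ) - β j))) *
           ((((γ j : ℕ) - β j : ℕ) : ℝ) * (y j) ^ ((γ j : ℕ) - β j - 1) : ℝ))) := by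
    simp only [ContinuousLinearMap.smul_apply, ContinuousLinearMap.sum_apply, smul_eq_mul]
    congr 1
    rw [Finset.sum_eq_single j]
    · simp [hg', smul_eq_mul]
    · intro i _ hij
      simp [hg', Pi.single_eq_of_ne hij]
    · intro h; exact absurd (Finset.mem_univ j) h
  rw [heval]
  have hupd : ∀ i, i ≠ j → (Function.update β j (β j + 1)) i = β i :=
    fun i h => Function.update_of_ne h _ _
  have hprod_eq : (∏ i, ((Nat.descFactorial (γ i : ℕ) ((Function.update β j (β j + 1)) i) : ℂ) *
        Complex.I ^ ((Function.update β j (β j + 1)) i +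
          ((γ i : ℕ) - (Function.update β j (β j + 1)) i)) *
        (((y i) ^ ((γ i : ℕ) - (Function.update β j (β j + 1)) i) : ℝ) : ℂ)))
      = (∏ k ∈ Finset.univ.erase j, g γ k y) *
          (((Nat.descFactorial (γ j : ℕ) (β j) : ℂ) * Complex.I ^ (β j + ((γ j : ℕ) - β j))) *
           ((((γ j : ℕ) - β j : ℕ) : ℝ) * (y j) ^ ((γ j : ℕ) - β j - 1) : ℝ)) := by
    rw [← Finset.mul_prod_erase Finset.univ _ (Finset.mem_univ j)]
    have hrest : ∀ k ∈ Finset.univ.erase j,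
        ((Nat.descFactorial (γ k : ℕ) ((Function.update β j (β j + 1)) k) : ℂ) *
          Complex.I ^ ((Function.update β j (β j + 1)) k +
            ((γ k : ℕ) - (Function.update β j (β j + 1)) k)) *
          (((y k) ^ ((γ k : ℕ) - (Function.update β j (β j + 1)) k) : ℝ) : ℂ)) = g γ k y := by
      intro k hk
      rw [hupd k (Finset.mem_erase.1 hk).1]
    rw [Finset.prod_congr rfl hrest]
    rw [mul_comm]
    congr 1
    rw [Function.update_self]
    rcases Nat.eq_zero_or_pos ((γ j : ℕ) - β j) with h0 | hpos
    · have hlt : (γ j : ℕ) < β j + 1 := by omega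
      rw [Nat.descFactorial_eq_zero_iff_lt.2 hlt, h0]
      push_cast
      ring
    · obtain ⟨m, hm⟩ : ∃ m, (γ j : ℕ) - β j = m + 1 := ⟨(γ j : ℕ) - β j - 1, by omega⟩
      have hdesc : Nat.descFactorial (γ j : ℕ) (β j + 1)
          = ((γ j : ℕ) - β j) * Nat.descFactorial (γ j : ℕ) (β j) :=
        Nat.descFactorial_succ _ _
      have he1 : (γ j : ℕ) - (β j + 1) = m := by omega
      have he2 : β j + 1 + m = β j + (m + 1) := by omega
      rw [hdesc, hm, he1, he2]
      push_cast
      ring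
  rw [hprod_eq]
  ring

end SFdef

/-! ### Generic foldr lemma -/

section Foldr

variable {n : ℕ} {A : Type*}

lemma step_iter (G : (Fin n → ℕ) → A) (step : Fin n → A → A)
    (hstep : ∀ j δ, step j (G δ) = G (Function.update δ j (δ j + 1)))
    (j : Fin n) (m : ℕ) (δ : Fin n → ℕ) :
    (step j)^[m] (G δ) = G (Function.update δ j (δ j + m)) := by
  induction m with
  | zero => simp
  | succ m ih =>
      rw [Function.iterate_succ_apply', ih, hstep]
      congr 1
      funext i
      rcases eq_or_ne i j with rfl | h
      · simp [Nat.add_assoc]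
      · simp [h, Function.update_of_ne h]

lemma foldr_eq (G : (Fin n → ℕ) → A) (step : Fin n → A → A)
    (hstep : ∀ j δ, step j (G δ) = G (Function.update δ j (δ j + 1))) :
    ∀ (l : List (Fin n)), l.Nodup → ∀ (μ δ₀ : Fin n → ℕ),
      l.foldr (fun j g => (step j)^[μ j] g) (G δ₀)
        = G (fun i => δ₀ i + if i ∈ l then μ i else 0) := by
  intro l
  induction l with
  | nil => intro _ μ δ₀; simp
  | cons a l ih =>
      intro hnd μ δ₀
      have hal := List.nodup_cons.1 hnd
      show (step a)^[μ a] (l.foldr (fun j g => (step j)^[μ j] g) (G δ₀)) = _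
      rw [ih hal.2 μ δ₀, step_iter G step hstep]
      congr 1
      funext i
      rcases eq_or_ne i a with rfl | h
      · simp [hal.1]
      · simp [h, Function.update_of_ne h, List.mem_cons]

end Foldr

/-! ### Arithmetic lemmas -/

open Real

/-- (a + d)! ≤ a! * d! * (d+1)^a -/
lemma fact_add_le (a d : ℕ) : Nat.factorial (a + d) ≤
    Nat.factorial a * Nat.factorial d * (d + 1) ^ a := by
  induction a with
  | zero => simp
  | succ a ih =>
      have h1 : (a + 1 + d) = (a + d) + 1 := by omega
      rw [h1, Nat.factorial_succ]
      calc (a + d + 1) * Nat.factorial (a + d)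
          ≤ (a + d + 1) * (Nat.factorial a * Nat.factorial d * (d + 1) ^ a) :=
            Nat.mul_le_mul_left _ ih
        _ ≤ ((a + 1) * (d + 1)) * (Nat.factorial a * Nat.factorial d * (d + 1) ^ a) := by
            apply Nat.mul_le_mul_right
            nlinarith
        _ = Nat.factorial (a + 1) * Nat.factorial d * (d + 1) ^ (a + 1) := by
            rw [Nat.factorial_succ]
            ring

/-- k! ≤ e·k·(k/e)^k for k ≥ 1 -/
lemma fact_le_exp (k : ℕ) (hk : 1 ≤ k) :
    (Nat.factorial k : ℝ) ≤ exp 1 * k * ((k : ℝ) / exp 1) ^ k := by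
  induction k with
  | zero => omega
  | succ k ih =>
      rcases Nat.eq_zero_or_pos k with rfl | hk1
      · simp only [Nat.factorial, Nat.cast_one, zero_add, pow_one, Nat.cast_ofNat]
        norm_num [mul_one_div, div_self (exp_ne_zero 1)]
      · have ih' := ih hk1
        have hkR : (1:ℝ) ≤ (k:ℝ) := by exact_mod_cast hk1
        have hkpos : (0:ℝ) < k := by linarith
        have hexp : exp (1 / ((k:ℝ) + 1)) ≤ ((k:ℝ) + 1) / k := by
          have h := add_one_le_exp (-(1 / ((k:ℝ) + 1)))
          have hpos : (0:ℝ) < 1 - 1 / ((k:ℝ)+1) := by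
            rw [sub_pos, div_lt_one (by linarith)]; linarith
          have h2 : -(1 / ((k:ℝ) + 1)) + 1 = 1 - 1/((k:ℝ)+1) := by ring
          rw [h2] at h
          have h3 : (exp (-(1/((k:ℝ)+1))))⁻¹ ≤ (1 - 1/((k:ℝ)+1))⁻¹ := inv_anti₀ hpos h
          rw [← exp_neg, neg_neg] at h3
          have h4 : (1 - 1/((k:ℝ)+1))⁻¹ = ((k:ℝ)+1)/k := by
            rw [show (1 - 1/((k:ℝ)+1)) = k/((k:ℝ)+1) by field_simp; ring]
            rw [inv_div]
          rwa [h4] at h3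
        have hE : exp 1 ≤ (((k:ℝ) + 1) / k) ^ (k+1) := by
          have h5 := pow_le_pow_left₀ (exp_pos _).le hexp (k+1)
          rwa [← exp_nat_mul, show ((k+1:ℕ) : ℝ) * (1/((k:ℝ)+1)) = 1 by
            push_cast; field_simp] at h5
        have hkey : exp 1 * (k:ℝ)^(k+1) ≤ ((k:ℝ)+1)^(k+1) := by
          have h6 := mul_le_mul_of_nonneg_right hE (pow_nonneg hkpos.le (k+1))
          rwa [div_pow, div_mul_cancel₀] at h6
          positivity
        have hcast : ((Nat.factorial (k+1) : ℕ) : ℝ) = ((k:ℝ)+1) * (Nat.factorial k : ℝ) := by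
          rw [Nat.factorial_succ]; push_cast; ring
        rw [hcast]
        push_cast
        calc ((k:ℝ)+1) * (Nat.factorial k : ℝ)
            ≤ ((k:ℝ)+1) * (exp 1 * k * ((k:ℝ)/exp 1)^k) := by
              apply mul_le_mul_of_nonneg_left ih' (by linarith)
          _ = (exp 1 * (k:ℝ)^(k+1)) * (((k:ℝ)+1)/exp 1 ^ k) := by
              rw [div_pow]; field_simp; ring
          _ ≤ (((k:ℝ)+1)^(k+1)) * (((k:ℝ)+1)/exp 1 ^ k) := by
              apply mul_le_mul_of_nonneg_right hkey
              positivity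
          _ = exp 1 * ((k:ℝ)+1) * ((((k:ℝ)+1))/exp 1) ^ (k+1) := by
              rw [div_pow]; field_simp; ring

lemma key_bound (s R : ℝ) (hs : 1 < s) (hR : 0 < R) (M₀ : ℕ) :
    ∃ Cq : ℝ, 1 ≤ Cq ∧ ∀ w : ℝ, 0 < w → w ≤ 1 → ∀ k : ℕ,
      k ≤ Nat.floor ((R * w) ^ (-(1 / (s - 1))) : ℝ) →
      (R * w) ^ k * (Nat.factorial k : ℝ) ^ (s - 1) * ((k : ℝ) + 1) ^ M₀
        ≤ Cq * Real.exp (-((s-1)/2)) ^ k := by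
  have hs1 : 0 < s - 1 := by linarith
  set c : ℝ := (s - 1) / 2 with hc
  have hcpos : 0 < c := by positivity
  set m' : ℕ := ⌈s - 1⌉₊ with hm'
  set q : ℕ := M₀ + m' with hq
  refine ⟨max 1 (exp 1 ^ m' * ((Nat.factorial q : ℝ) / c ^ q * exp c)), le_max_left _ _, ?_⟩
  intro w hw hw1 k hk
  rcases Nat.eq_zero_or_pos k with rfl | hk1
  · simp only [pow_zero, one_mul, mul_one, Nat.factorial_zero, Nat.cast_one,
      Real.one_rpow, Nat.cast_zero, zero_add, one_pow]
    exact le_max_left _ _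
  set N : ℕ := Nat.floor ((R * w) ^ (-(1 / (s - 1))) : ℝ) with hN
  have hRw : 0 < R * w := mul_pos hR hw
  have hNk : 1 ≤ N := le_trans hk1 hk
  have hNpos : (0:ℝ) < N := by exact_mod_cast hNk
  have hfloor : (N : ℝ) ≤ (R * w) ^ (-(1 / (s - 1))) := Nat.floor_le (rpow_nonneg hRw.le _)
  have step1 : (N : ℝ) ^ (s - 1) ≤ (R * w)⁻¹ := by
    have h1 : (N : ℝ) ^ (s - 1) ≤ ((R * w) ^ (-(1 / (s - 1)))) ^ (s - 1) :=
      rpow_le_rpow (Nat.cast_nonneg N) hfloor hs1.le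
    have h2 : ((R * w) ^ (-(1 / (s - 1)))) ^ (s - 1) = (R * w) ^ ((-(1 / (s - 1))) * (s - 1)) :=
      (Real.rpow_mul hRw.le _ _).symm
    have h3 : (-(1 / (s - 1))) * (s - 1) = -1 := by field_simp
    rw [h2, h3, Real.rpow_neg_one] at h1
    exact h1
  have hNs_pos : (0:ℝ) < (N : ℝ) ^ (s - 1) := rpow_pos_of_pos hNpos _
  have step2 : R * w ≤ ((N : ℝ) ^ (s - 1))⁻¹ := by
    have := inv_anti₀ hNs_pos step1
    rwa [inv_inv] at this
  have step3 : (R * w) ^ k ≤ (((N : ℝ) ^ (s - 1))⁻¹) ^ k := pow_le_pow_left₀ hRw.le step2 k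
  have step4 : (((N : ℝ) ^ (s - 1))⁻¹) ^ k * (Nat.factorial k : ℝ) ^ (s - 1)
      = ((Nat.factorial k : ℝ) / ((N : ℝ) ^ k)) ^ (s - 1) := by
    have h1 : (((N : ℝ) ^ (s - 1)): ℝ) ^ (k:ℕ) = ((N : ℝ) ^ (k:ℕ)) ^ (s - 1) := by
      rw [← Real.rpow_natCast ((N : ℝ) ^ (s - 1)) k, ← Real.rpow_mul (Nat.cast_nonneg N),
        mul_comm, Real.rpow_mul (Nat.cast_nonneg N), Real.rpow_natCast]
    rw [inv_pow, h1, Real.div_rpow (Nat.cast_nonneg _) (by positivity)]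
    ring
  have hkR : (1:ℝ) ≤ (k:ℝ) := by exact_mod_cast hk1
  have hkNR : (k:ℝ) ≤ (N:ℝ) := by exact_mod_cast hk
  have step5 : (Nat.factorial k : ℝ) / ((N : ℝ) ^ k) ≤ exp 1 * k * (1 / exp 1) ^ k := by
    have h1 := fact_le_exp k hk1
    have h2 : ((k:ℝ) / exp 1) ^ k / ((N : ℝ) ^ k) = ((k:ℝ) / (exp 1 * N)) ^ k := by
      rw [div_pow, div_div, ← mul_pow, ← div_pow]
    have h3 : ((k:ℝ) / (exp 1 * N)) ^ k ≤ (1 / exp 1) ^ k := by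
      apply pow_le_pow_left₀ (by positivity)
      rw [div_le_div_iff₀ (by positivity) (exp_pos 1)]
      calc (k:ℝ) * exp 1 ≤ (N:ℝ) * exp 1 := by
            apply mul_le_mul_of_nonneg_right hkNR (exp_pos 1).le
        _ = 1 * (exp 1 * N) := by ring
    calc (Nat.factorial k : ℝ) / ((N : ℝ) ^ k)
        ≤ (exp 1 * k * ((k:ℝ) / exp 1) ^ k) / ((N : ℝ) ^ k) := by
          apply div_le_div_of_nonneg_right h1 (by positivity)
      _ = exp 1 * k * (((k:ℝ) / exp 1) ^ k / ((N : ℝ) ^ k)) := by ring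
      _ = exp 1 * k * ((k:ℝ) / (exp 1 * N)) ^ k := by rw [h2]
      _ ≤ exp 1 * k * (1 / exp 1) ^ k := by
          apply mul_le_mul_of_nonneg_left h3 (by positivity)
  have hexpk : ((1:ℝ) / exp 1) ^ k = exp (-(k:ℝ)) := by
    rw [one_div, ← exp_neg, ← exp_nat_mul]
    norm_num
  have step6 : ((Nat.factorial k : ℝ) / ((N : ℝ) ^ k)) ^ (s - 1)
      ≤ (exp 1 * k) ^ (s - 1) * exp (-(k:ℝ) * (s - 1)) := by
    have h1 : ((Nat.factorial k : ℝ) / ((N : ℝ) ^ k)) ^ (s - 1)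
        ≤ (exp 1 * k * exp (-(k:ℝ))) ^ (s - 1) := by
      apply rpow_le_rpow (by positivity) _ hs1.le
      rw [← hexpk]; exact step5
    have h2 : (exp 1 * (k:ℝ) * exp (-(k:ℝ))) ^ (s - 1)
        = (exp 1 * k) ^ (s - 1) * exp (-(k:ℝ) * (s - 1)) := by
      rw [Real.mul_rpow (by positivity) (exp_pos _).le, ← Real.exp_mul]
    rw [h2] at h1
    exact h1
  have step7 : (exp 1 * (k:ℝ)) ^ (s - 1) ≤ exp 1 ^ m' * ((k:ℝ) + 1) ^ m' := by
    have hbase : (1:ℝ) ≤ exp 1 * k := by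
      calc (1:ℝ) = 1 * 1 := by ring
        _ ≤ exp 1 * k := mul_le_mul (by linarith [exp_one_gt_d9]) hkR zero_le_one (exp_pos 1).le
    have h1 : (exp 1 * (k:ℝ)) ^ (s - 1) ≤ (exp 1 * (k:ℝ)) ^ (m' : ℝ) := by
      apply rpow_le_rpow_of_exponent_le hbase
      exact le_trans (Nat.le_ceil (s-1)) le_rfl
    rw [Real.rpow_natCast] at h1
    calc (exp 1 * (k:ℝ)) ^ (s - 1) ≤ (exp 1 * (k:ℝ)) ^ (m' : ℕ) := h1
      _ ≤ (exp 1 * ((k:ℝ) + 1)) ^ (m' : ℕ) := by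
          apply pow_le_pow_left₀ (by positivity)
          nlinarith [exp_pos 1]
      _ = exp 1 ^ m' * ((k:ℝ) + 1) ^ m' := mul_pow _ _ _
  have step8 : ((k:ℝ) + 1) ^ q ≤ (Nat.factorial q : ℝ) / c ^ q * (exp c * exp (c * k)) := by
    have h1 := Real.pow_div_factorial_le_exp (x := c * ((k:ℝ) + 1)) (by positivity) q
    have h2 : (c * ((k:ℝ) + 1)) ^ q = c ^ q * ((k:ℝ) + 1) ^ q := mul_pow _ _ _
    have h3 : exp (c * ((k:ℝ) + 1)) = exp c * exp (c * k) := by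
      rw [← exp_add]; ring_nf
    rw [h2, h3] at h1
    rw [div_le_iff₀ (by positivity : (0:ℝ) < (Nat.factorial q : ℝ))] at h1
    have h4 : ((k:ℝ)+1)^q ≤ exp c * exp (c*k) * (Nat.factorial q : ℝ) / c^q := by
      rw [le_div_iff₀ (by positivity : (0:ℝ) < c^q)]
      calc ((k:ℝ)+1)^q * c^q = c^q * ((k:ℝ)+1)^q := by ring
        _ ≤ exp c * exp (c*k) * (Nat.factorial q : ℝ) := h1
    rw [show (Nat.factorial q : ℝ)/c^q*(exp c*exp (c*(k:ℝ)))
      = exp c * exp (c*(k:ℝ)) * (Nat.factorial q : ℝ)/c^q by ring]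
    exact h4
  have hfk : (0:ℝ) ≤ ((k:ℝ) + 1) ^ M₀ := by positivity
  have main : (R * w) ^ k * (Nat.factorial k : ℝ) ^ (s - 1) * ((k : ℝ) + 1) ^ M₀
      ≤ exp 1 ^ m' * ((Nat.factorial q : ℝ) / c ^ q * exp c) * exp (-(c * k)) := by
    calc (R * w) ^ k * (Nat.factorial k : ℝ) ^ (s - 1) * ((k : ℝ) + 1) ^ M₀
        ≤ (((N : ℝ) ^ (s - 1))⁻¹) ^ k * (Nat.factorial k : ℝ) ^ (s - 1) * ((k : ℝ) + 1) ^ M₀ := by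
          apply mul_le_mul_of_nonneg_right _ hfk
          apply mul_le_mul_of_nonneg_right step3 (rpow_nonneg (Nat.cast_nonneg _) _)
      _ = ((Nat.factorial k : ℝ) / ((N : ℝ) ^ k)) ^ (s - 1) * ((k : ℝ) + 1) ^ M₀ := by
          rw [step4]
      _ ≤ (exp 1 * k) ^ (s - 1) * exp (-(k:ℝ) * (s - 1)) * ((k : ℝ) + 1) ^ M₀ := by
          apply mul_le_mul_of_nonneg_right step6 hfk
      _ ≤ exp 1 ^ m' * ((k:ℝ) + 1) ^ m' * exp (-(k:ℝ) * (s - 1)) * ((k : ℝ) + 1) ^ M₀ := by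
          apply mul_le_mul_of_nonneg_right _ hfk
          apply mul_le_mul_of_nonneg_right step7 (exp_pos _).le
      _ = exp 1 ^ m' * (((k:ℝ) + 1) ^ q * exp (-(k:ℝ) * (s - 1))) := by
          rw [hq, pow_add]; ring
      _ ≤ exp 1 ^ m' * ((Nat.factorial q : ℝ) / c ^ q * (exp c * exp (c * k)) *
            exp (-(k:ℝ) * (s - 1))) := by
          apply mul_le_mul_of_nonneg_left _ (by positivity)
          apply mul_le_mul_of_nonneg_right step8 (exp_pos _).le
      _ = exp 1 ^ m' * ((Nat.factorial q : ℝ) / c ^ q * exp c) *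
            (exp (c * k) * exp (-(k:ℝ) * (s - 1))) := by
          ring
      _ = exp 1 ^ m' * ((Nat.factorial q : ℝ) / c ^ q * exp c) * exp (-(c * k)) := by
          rw [← exp_add]
          congr 1
          rw [hc]; ring
  have hrk : exp (-(c * (k:ℝ))) = exp (-c) ^ k := by
    rw [← exp_nat_mul]; congr 1; ring
  calc (R * w) ^ k * (Nat.factorial k : ℝ) ^ (s - 1) * ((k : ℝ) + 1) ^ M₀
      ≤ exp 1 ^ m' * ((Nat.factorial q : ℝ) / c ^ q * exp c) * exp (-(c * k)) := main
    _ ≤ max 1 (exp 1 ^ m' * ((Nat.factorial q : ℝ) / c ^ q * exp c)) * exp (-(c * k)) := by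
        apply mul_le_mul_of_nonneg_right (le_max_right _ _) (exp_pos _).le
    _ = max 1 (exp 1 ^ m' * ((Nat.factorial q : ℝ) / c ^ q * exp c)) * exp (-((s-1)/2)) ^ k := by
        rw [hrk, hc]

lemma one_le_jb {n : ℕ} (x : Fin n → ℝ) : 1 ≤ jb x := by
  have h : (1:ℝ) ≤ 1 + ∑ i, (x i)^2 := le_add_of_nonneg_right (by positivity)
  calc (1:ℝ) = Real.sqrt 1 := Real.sqrt_one.symm
    _ ≤ Real.sqrt (1 + ∑ i, (x i)^2) := Real.sqrt_le_sqrt h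
    _ = jb x := rfl

lemma geom_bound {r : ℝ} (h0 : 0 ≤ r) (h1 : r < 1) (m : ℕ) :
    ∑ i ∈ Finset.range m, r ^ i ≤ (1 - r)⁻¹ := by
  have hne : r ≠ 1 := ne_of_lt h1
  rw [geom_sum_eq hne]
  rw [show (r ^ m - 1) / (r - 1) = (1 - r ^ m) / (1 - r) by
    rw [← neg_div_neg_eq]; ring_nf]
  rw [div_le_iff₀ (by linarith), inv_mul_cancel₀ (by linarith : (1:ℝ) - r ≠ 0)]
  have : 0 ≤ r ^ m := pow_nonneg h0 m
  linarith

/-- Uniform bounds for all derivatives of the almost analytic extension on the strip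
    S_w, uniformly in w ∈ (0,1], with N = ⌊(Rw)^{-1/(s-1)}⌋. -/
theorem stmt8 (n : ℕ) (s R a C₀ : ℝ) (hs : 1 < s) (hR : 0 < R) (hC₀ : 0 < C₀)
    (f : (Fin n → ℝ) → ℝ) (hf : ContDiff ℝ (⊤ : ℕ∞) f)
    (hder : ∀ (α : Fin n → ℕ) (x : Fin n → ℝ),
      |mderiv α f x| ≤ C₀ * R ^ (∑ i, α i) * ((∏ i, Nat.factorial (α i) : ℕ) : ℝ) ^ s *
        jb x ^ (a - ((∑ i, α i : ℕ) : ℝ))) :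
    ∀ α β : Fin n → ℕ, ∃ C : ℝ, 0 < C ∧
      ∀ w : ℝ, 0 < w → w ≤ 1 → ∀ x y : Fin n → ℝ, (∀ j, |y j| < w) →
        ‖mdx α (mdy β (aae (Nat.floor ((R * w) ^ (-(1 / (s - 1))) : ℝ)) f)) x y‖ ≤
          C * jb x ^ (a - ((∑ i, (α i + β i) : ℕ) : ℝ)) := by
  intro α β
  have hs1 : 0 < s - 1 := by linarith
  set L : ℕ := ∑ i, (α i + β i) with hL
  set M₀ : ℕ := L * ⌈s⌉₊ with hM₀
  obtain ⟨Cq, hCq1, hCq⟩ := key_bound s R hs hR M₀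
  have hCq0 : 0 < Cq := lt_of_lt_of_le one_pos hCq1
  set rr : ℝ := Real.exp (-((s-1)/2)) with hrr
  have hrr0 : 0 < rr := Real.exp_pos _
  have hrr1 : rr < 1 := by
    rw [hrr, Real.exp_lt_one_iff]
    linarith
  set F₁ : ℕ := ∏ i, Nat.factorial (α i + β i) with hF₁
  have hF₁pos : (0:ℝ) < (F₁ : ℝ) := by
    have : 0 < F₁ := Finset.prod_pos fun i _ => Nat.factorial_pos _
    exact_mod_cast this
  set KK : ℝ := C₀ * R ^ L * (F₁ : ℝ) ^ s * Cq with hKK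
  have hKKpos : 0 < KK := by
    apply mul_pos (mul_pos (mul_pos hC₀ (pow_pos hR L)) (Real.rpow_pos_of_pos hF₁pos s)) hCq0
  set P₀ : ℝ := ∏ i : Fin n, ((1/rr) ^ (β i) * (1 - rr)⁻¹) with hP₀
  have hP₀pos : 0 < P₀ := Finset.prod_pos fun i _ =>
    mul_pos (pow_pos (by positivity) _) (inv_pos.2 (by linarith))
  refine ⟨KK * P₀, mul_pos hKKpos hP₀pos, ?_⟩
  intro w hw hw1 x y hy
  set N : ℕ := Nat.floor ((R * w) ^ (-(1 / (s - 1))) : ℝ) with hN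
  have hjb1 : 1 ≤ jb x := one_le_jb x
  have hjb0 : 0 < jb x := lt_of_lt_of_le one_pos hjb1
  set jbf : ℝ := jb x ^ (a - (L:ℝ)) with hjbf
  have hjbf0 : 0 < jbf := Real.rpow_pos_of_pos hjb0 _
  -- master formula
  have hmaster : mdx α (mdy β (aae N f)) = SF f N α β := by
    have h1 : mdy β (aae N f) = SF f N (fun _ => 0) β := by
      rw [aae_eq_SF f N]
      have h := foldr_eq (fun δ => SF f N (fun _ => 0) δ) pdy
        (fun j δ => pdy_SF f N (fun _ => 0) δ j) (List.finRange n) (List.nodup_finRange n)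
        β (fun _ => 0)
      show (List.finRange n).foldr (fun j G => (pdy j)^[β j] G)
        (SF f N (fun _ => 0) (fun _ => 0)) = _
      rw [h]
      congr 1
      funext i
      simp [List.mem_finRange]
    rw [h1]
    have h := foldr_eq (fun μ => SF f N μ β) pdx
      (fun j δ => pdx_SF hf N δ β j) (List.finRange n) (List.nodup_finRange n) α (fun _ => 0)
    show (List.finRange n).foldr (fun j G => (pdx j)^[α j] G) (SF f N (fun _ => 0) β) = _
    rw [h]
    congr 1
    funext i
    simp [List.mem_finRange]
  rw [hmaster]
  -- per-term estimate
  have hclaim : ∀ γ ∈ Finset.univ.filter (fun γ : Fin n → Fin (N + 1) => ∑ i, (γ i : ℕ) ≤ N),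
      ‖(∏ i, ((Nat.descFactorial (γ i : ℕ) (β i) : ℂ) *
          Complex.I ^ (β i + ((γ i : ℕ) - β i)) * (((y i) ^ ((γ i : ℕ) - β i) : ℝ) : ℂ))) /
        ((∏ i, Nat.factorial (γ i : ℕ) : ℕ) : ℂ) *
        ((mderiv (fun i => α i + (γ i : ℕ)) f x : ℝ) : ℂ)‖
      ≤ KK * jbf * ∏ i, rr ^ ((γ i : ℕ) - β i) := by
    intro γ hγA
    have hγ : ∑ i, (γ i : ℕ) ≤ N := (Finset.mem_filter.1 hγA).2
    have hFn_pos : (0:ℝ) < ((∏ i, Nat.factorial (γ i : ℕ) : ℕ) : ℝ) := by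
      have : 0 < ∏ i, Nat.factorial (γ i : ℕ) := Finset.prod_pos fun i _ => Nat.factorial_pos _
      exact_mod_cast this
    have hnorm : ‖(∏ i, ((Nat.descFactorial (γ i : ℕ) (β i) : ℂ) *
          Complex.I ^ (β i + ((γ i : ℕ) - β i)) * (((y i) ^ ((γ i : ℕ) - β i) : ℝ) : ℂ))) /
        ((∏ i, Nat.factorial (γ i : ℕ) : ℕ) : ℂ) *
        ((mderiv (fun i => α i + (γ i : ℕ)) f x : ℝ) : ℂ)‖
        = (∏ i, ((Nat.descFactorial (γ i : ℕ) (β i) : ℝ) * |y i| ^ ((γ i : ℕ) - β i))) /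
          ((∏ i, Nat.factorial (γ i : ℕ) : ℕ) : ℝ) *
          |mderiv (fun i => α i + (γ i : ℕ)) f x| := by
      rw [norm_mul, norm_div, norm_prod]
      congr 1
      · congr 1
        · apply Finset.prod_congr rfl
          intro i _
          rw [norm_mul, norm_mul, norm_pow, Complex.norm_I, one_pow, mul_one]
          rw [Complex.norm_natCast, Complex.norm_real, Real.norm_eq_abs, abs_pow]
        · rw [Complex.norm_natCast]
      · rw [Complex.norm_real, Real.norm_eq_abs]
    rw [hnorm]
    by_cases hβγ : ∀ i, β i ≤ (γ i : ℕ)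
    · -- main case
      set δ : Fin n → ℕ := fun i => (γ i : ℕ) - β i with hδ
      set k : ℕ := ∑ i, δ i with hk
      have hγsplit : ∀ i, β i + δ i = (γ i : ℕ) := fun i => Nat.add_sub_cancel' (hβγ i)
      have hkN : k ≤ N := by
        refine le_trans ?_ hγ
        apply Finset.sum_le_sum
        intro i _
        simp only [hδ]
        omega
      have hδk : ∀ i, δ i ≤ k := fun i =>
        Finset.single_le_sum (fun i _ => Nat.zero_le (δ i)) (Finset.mem_univ i)
      set descP : ℕ := ∏ i, Nat.descFactorial (γ i : ℕ) (β i) with hdescP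
      set Dn : ℕ := ∏ i, Nat.factorial (δ i) with hDn
      have hDn_pos : (0:ℝ) < (Dn:ℝ) := by
        have : 0 < Dn := Finset.prod_pos fun i _ => Nat.factorial_pos _
        exact_mod_cast this
      have hFn_eq : (∏ i, Nat.factorial (γ i : ℕ)) = descP * Dn := by
        rw [hdescP, hDn, ← Finset.prod_mul_distrib]
        apply Finset.prod_congr rfl
        intro i _
        simp only [hδ]
        rw [mul_comm, ← Nat.factorial_mul_descFactorial (hβγ i)]
      have hdescP_ne : (descP:ℝ) ≠ 0 := by
        have h1 : 0 < descP * Dn := by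
          rw [← hFn_eq]
          exact Finset.prod_pos fun i _ => Nat.factorial_pos _
        have h2 : descP ≠ 0 := by
          intro h
          rw [h, zero_mul] at h1
          exact absurd h1 (lt_irrefl 0)
        exact Nat.cast_ne_zero.2 h2
      -- numerator bound
      have e1 : (∏ i, ((Nat.descFactorial (γ i : ℕ) (β i) : ℝ) * |y i| ^ δ i))
          ≤ (descP:ℝ) * w ^ k := by
        calc (∏ i, ((Nat.descFactorial (γ i : ℕ) (β i) : ℝ) * |y i| ^ δ i))
            ≤ (∏ i, ((Nat.descFactorial (γ i : ℕ) (β i) : ℝ) * w ^ δ i)) := by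
              apply Finset.prod_le_prod
              · intro i _; positivity
              · intro i _
                apply mul_le_mul_of_nonneg_left _ (Nat.cast_nonneg _)
                exact pow_le_pow_left₀ (abs_nonneg _) (le_of_lt (hy i)) _
          _ = (descP:ℝ) * w ^ k := by
              rw [Finset.prod_mul_distrib, Finset.prod_pow_eq_pow_sum, hdescP, hk]
              push_cast
              ring
      -- derivative bound
      have hsum_idx : ∑ i, (α i + (γ i : ℕ)) = L + k := by
        rw [hL, hk]
        rw [← Finset.sum_add_distrib]
        apply Finset.sum_congr rfl
        intro i _
        have := hγsplit i; omega
      have hfact_le : (∏ i, Nat.factorial (α i + (γ i : ℕ)))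
          ≤ F₁ * Dn * (k+1) ^ L := by
        calc (∏ i, Nat.factorial (α i + (γ i : ℕ)))
            ≤ ∏ i, (Nat.factorial (α i + β i) * Nat.factorial (δ i) * (k+1) ^ (α i + β i)) := by
              apply Finset.prod_le_prod'
              intro i _
              have h1 : α i + (γ i : ℕ) = (α i + β i) + δ i := by
                have := hγsplit i; omega
              rw [h1]
              calc Nat.factorial ((α i + β i) + δ i)
                  ≤ Nat.factorial (α i + β i) * Nat.factorial (δ i) * (δ i + 1) ^ (α i + β i) :=
                    fact_add_le _ _
                _ ≤ Nat.factorial (α i + β i) * Nat.factorial (δ i) * (k + 1) ^ (α i + β i) := by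
                    exact Nat.mul_le_mul_left _
                      (Nat.pow_le_pow_left (Nat.succ_le_succ (hδk i)) _)
          _ = F₁ * Dn * (k+1) ^ L := by
              rw [Finset.prod_mul_distrib, Finset.prod_mul_distrib, hF₁, hDn, hL,
                Finset.prod_pow_eq_pow_sum]
      have hm2 : |mderiv (fun i => α i + (γ i : ℕ)) f x|
          ≤ C₀ * R ^ (L + k) * (((F₁ * Dn * (k+1) ^ L : ℕ)):ℝ) ^ s * jbf := by
        have h1 := hder (fun i => α i + (γ i : ℕ)) x
        rw [hsum_idx] at h1
        calc |mderiv (fun i => α i + (γ i : ℕ)) f x|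
            ≤ C₀ * R ^ (L + k) * ((∏ i, Nat.factorial (α i + (γ i : ℕ)) : ℕ) : ℝ) ^ s *
              jb x ^ (a - ((L + k : ℕ) : ℝ)) := h1
          _ ≤ C₀ * R ^ (L + k) * (((F₁ * Dn * (k+1) ^ L : ℕ)):ℝ) ^ s * jbf := by
              apply mul_le_mul
              · apply mul_le_mul_of_nonneg_left _ (by positivity)
                apply Real.rpow_le_rpow (Nat.cast_nonneg _) _ (by linarith)
                exact_mod_cast hfact_le
              · rw [hjbf]
                apply Real.rpow_le_rpow_of_exponent_le hjb1
                push_cast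
                linarith [Nat.cast_nonneg (α := ℝ) k]
              · positivity
              · positivity
      -- splitting the rpow of the product
      have hsplit : (((F₁ * Dn * (k+1) ^ L : ℕ)):ℝ) ^ s
          = (F₁:ℝ) ^ s * (Dn:ℝ) ^ s * ((((k:ℝ)+1)) ^ L) ^ s := by
        push_cast
        rw [Real.mul_rpow (by positivity) (by positivity),
          Real.mul_rpow (by positivity) (by positivity)]
      have hDnpow : (Dn:ℝ) ^ s / (Dn:ℝ) ≤ ((Nat.factorial k : ℝ)) ^ (s - 1) := by
        have h1 : (Dn:ℝ) ^ s / (Dn:ℝ) = (Dn:ℝ) ^ (s - 1) := by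
          rw [Real.rpow_sub_one (ne_of_gt hDn_pos)]
        rw [h1]
        apply Real.rpow_le_rpow (Nat.cast_nonneg _) _ (by linarith)
        have : Dn ∣ Nat.factorial k := by
          rw [hDn, hk]
          exact Nat.prod_factorial_dvd_factorial_sum _ _
        exact_mod_cast Nat.le_of_dvd (Nat.factorial_pos k) this
      have hBpow : ((((k:ℝ)+1)) ^ L) ^ s ≤ ((k:ℝ)+1) ^ M₀ := by
        have hbase : (1:ℝ) ≤ ((k:ℝ)+1) ^ L :=
          one_le_pow₀ (by linarith [Nat.cast_nonneg (α := ℝ) k])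
        calc ((((k:ℝ)+1)) ^ L) ^ s ≤ ((((k:ℝ)+1)) ^ L) ^ ((⌈s⌉₊ : ℕ) : ℝ) := by
              apply Real.rpow_le_rpow_of_exponent_le hbase (Nat.le_ceil s)
          _ = ((((k:ℝ)+1)) ^ L) ^ (⌈s⌉₊ : ℕ) := Real.rpow_natCast _ _
          _ = ((k:ℝ)+1) ^ M₀ := by rw [← pow_mul, hM₀]
      have hkey := hCq w hw hw1 k hkN
      -- the chain
      calc (∏ i, ((Nat.descFactorial (γ i : ℕ) (β i) : ℝ) * |y i| ^ ((γ i : ℕ) - β i))) /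
            ((∏ i, Nat.factorial (γ i : ℕ) : ℕ) : ℝ) *
            |mderiv (fun i => α i + (γ i : ℕ)) f x|
          ≤ ((descP:ℝ) * w ^ k) / ((∏ i, Nat.factorial (γ i : ℕ) : ℕ) : ℝ) *
            |mderiv (fun i => α i + (γ i : ℕ)) f x| := by
            apply mul_le_mul_of_nonneg_right _ (abs_nonneg _)
            exact (div_le_div_iff_of_pos_right hFn_pos).2 e1
        _ = w ^ k / (Dn:ℝ) *
            |mderiv (fun i => α i + (γ i : ℕ)) f x| := by
            congr 1
            rw [hFn_eq]
            push_cast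
            rw [mul_div_mul_left _ _ hdescP_ne]
        _ ≤ w ^ k / (Dn:ℝ) *
            (C₀ * R ^ (L + k) * (((F₁ * Dn * (k+1) ^ L : ℕ)):ℝ) ^ s * jbf) := by
            apply mul_le_mul_of_nonneg_left hm2 (by positivity)
        _ = (C₀ * R ^ L * (F₁:ℝ) ^ s) *
            ((R * w) ^ k * ((Dn:ℝ) ^ s / (Dn:ℝ)) * ((((k:ℝ)+1)) ^ L) ^ s) * jbf := by
            rw [hsplit, pow_add, mul_pow]
            field_simp
        _ ≤ (C₀ * R ^ L * (F₁:ℝ) ^ s) *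
            ((R * w) ^ k * ((Nat.factorial k : ℝ)) ^ (s - 1) * ((k:ℝ)+1) ^ M₀) * jbf := by
            apply mul_le_mul_of_nonneg_right _ hjbf0.le
            apply mul_le_mul_of_nonneg_left _ (by positivity)
            apply mul_le_mul
            · apply mul_le_mul_of_nonneg_left hDnpow (by positivity)
            · exact hBpow
            · positivity
            · positivity
        _ ≤ (C₀ * R ^ L * (F₁:ℝ) ^ s) * (Cq * rr ^ k) * jbf := by
            apply mul_le_mul_of_nonneg_right _ hjbf0.le
            apply mul_le_mul_of_nonneg_left _ (by positivity)
            exact hkey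
        _ = KK * jbf * ∏ i, rr ^ ((γ i : ℕ) - β i) := by
            rw [hKK, show rr ^ k = ∏ i, rr ^ δ i from (Finset.prod_pow_eq_pow_sum _ _ _).symm]
            ring
    · -- degenerate case: some β i > γ i
      push_neg at hβγ
      obtain ⟨i0, hi0⟩ := hβγ
      have hzero : (∏ i, ((Nat.descFactorial (γ i : ℕ) (β i) : ℝ) * |y i| ^ ((γ i : ℕ) - β i)))
          = 0 := by
        apply Finset.prod_eq_zero (Finset.mem_univ i0)
        rw [Nat.descFactorial_eq_zero_iff_lt.2 hi0]
        simp
      rw [hzero]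
      rw [zero_div, zero_mul]
      positivity
  -- sum the estimates
  have hgeo : ∀ i : Fin n, ∑ t : Fin (N + 1), rr ^ ((t : ℕ) - β i)
      ≤ (1/rr) ^ (β i) * (1 - rr)⁻¹ := by
    intro i
    have hterm : ∀ t : Fin (N + 1), rr ^ ((t : ℕ) - β i) ≤ (1/rr) ^ (β i) * rr ^ (t : ℕ) := by
      intro t
      rw [one_div, inv_pow, ← div_eq_inv_mul]
      rw [le_div_iff₀ (by positivity : (0:ℝ) < rr ^ (β i))]
      rw [← pow_add]
      apply pow_le_pow_of_le_one hrr0.le hrr1.le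
      omega
    calc ∑ t : Fin (N + 1), rr ^ ((t : ℕ) - β i)
        ≤ ∑ t : Fin (N + 1), (1/rr) ^ (β i) * rr ^ (t : ℕ) :=
          Finset.sum_le_sum fun t _ => hterm t
      _ = (1/rr) ^ (β i) * ∑ t ∈ Finset.range (N + 1), rr ^ t := by
          rw [← Finset.mul_sum, Fin.sum_univ_eq_sum_range]
      _ ≤ (1/rr) ^ (β i) * (1 - rr)⁻¹ := by
          apply mul_le_mul_of_nonneg_left (geom_bound hrr0.le hrr1 (N+1)) (by positivity)
  calc ‖SF f N α β x y‖
      ≤ ∑ γ ∈ Finset.univ.filter (fun γ : Fin n → Fin (N + 1) => ∑ i, (γ i : ℕ) ≤ N),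
        ‖(∏ i, ((Nat.descFactorial (γ i : ℕ) (β i) : ℂ) *
          Complex.I ^ (β i + ((γ i : ℕ) - β i)) * (((y i) ^ ((γ i : ℕ) - β i) : ℝ) : ℂ))) /
        ((∏ i, Nat.factorial (γ i : ℕ) : ℕ) : ℂ) *
        ((mderiv (fun i => α i + (γ i : ℕ)) f x : ℝ) : ℂ)‖ := norm_sum_le _ _
    _ ≤ ∑ γ ∈ Finset.univ.filter (fun γ : Fin n → Fin (N + 1) => ∑ i, (γ i : ℕ) ≤ N),
        KK * jbf * ∏ i, rr ^ ((γ i : ℕ) - β i) := Finset.sum_le_sum hclaim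
    _ = KK * jbf * ∑ γ ∈ Finset.univ.filter (fun γ : Fin n → Fin (N + 1) => ∑ i, (γ i : ℕ) ≤ N),
        ∏ i, rr ^ ((γ i : ℕ) - β i) := by rw [Finset.mul_sum]
    _ ≤ KK * jbf * ∑ γ : Fin n → Fin (N + 1), ∏ i, rr ^ ((γ i : ℕ) - β i) := by
        apply mul_le_mul_of_nonneg_left _ (by positivity)
        apply Finset.sum_le_sum_of_subset_of_nonneg (Finset.filter_subset _ _)
        intro γ _ _
        positivity
    _ = KK * jbf * ∏ i, ∑ t : Fin (N + 1), rr ^ ((t : ℕ) - β i) := by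
        congr 1
        rw [← Fintype.piFinset_univ]
        exact (Finset.prod_univ_sum (fun _ => (Finset.univ : Finset (Fin (N+1))))
          (fun i t => rr ^ ((t:ℕ) - β i))).symm
    _ ≤ KK * jbf * P₀ := by
        apply mul_le_mul_of_nonneg_left _ (by positivity)
        rw [hP₀]
        apply Finset.prod_le_prod
        · intro i _
          positivity
        · intro i _
          exact hgeo i
    _ = KK * P₀ * jbf := by ring
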